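/- arXiv:1505.02372 — 2 statements merged into one kernel-verified Lean document; each statement's English description precedes it below -/
import Mathlib

section
/- For each n, let c_n : 𝔹^n → 𝔹^{2^n} be the transformation sending x to the tuple of all conjunctions x₁^{a₁} ∧ ⋯ ∧ x_n^{a_n} over a ∈ 𝔹^n, where x^1 = x and x^0 = ¬x. There exists a family of reversible circuits (S_n) over NOT, CNOT and C²NOT gates and a sequence q(n) such that S_n implements c_n with q(n) additional inputs and, as n → ∞, L(S_n) ~ 2^n and q(n) ~ 2^n. -/
open Filter

namespace Rev

/-- A reversible gate `TOF(I; t)` on `N` lines: a control set `I` with `|I| ≤ 2`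
and a target `t ∉ I`.  `|I| = 0, 1, 2` correspond to NOT, CNOT, C²NOT. -/
structure Gate (N : ℕ) where
  I : Finset (Fin N)
  t : Fin N
  card_le : I.card ≤ 2
  t_not_mem : t ∉ I

/-- The transformation computed by a gate: the target coordinate is XORed with the
conjunction of the control coordinates (the empty conjunction is `1`). -/
def Gate.apply {N : ℕ} (g : Gate N) (x : Fin N → Bool) : Fin N → Bool :=
  fun j => if j = g.t then xor (x g.t) (decide (∀ i ∈ g.I, x i = true)) else x j

/-- A reversible circuit: a finite sequence (composition) of gates. -/
abbrev Circuit (N : ℕ) := List (Gate N)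

/-- The transformation computed by a circuit (composition of the gate maps). -/
def Circuit.eval {N : ℕ} (S : Circuit N) (x : Fin N → Bool) : Fin N → Bool :=
  S.foldl (fun v g => g.apply v) x

/-- Gate complexity: the number of gates. -/
def Circuit.L {N : ℕ} (S : Circuit N) : ℕ := S.length

/-- The number of NOT and CNOT gates. -/
def Circuit.LC {N : ℕ} (S : Circuit N) : ℕ := (S.filter fun g => g.I.card ≤ 1).length

/-- The number of C²NOT (Toffoli) gates. -/
def Circuit.LT {N : ℕ} (S : Circuit N) : ℕ := (S.filter fun g => g.I.card = 2).length

/-- The quantum weight, given weights `WC` for NOT/CNOT gates and `WT` for C²NOT gates. -/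
noncomputable def Circuit.W {N : ℕ} (WC WT : ℝ) (S : Circuit N) : ℝ :=
  WC * S.LC + WT * S.LT

/-- A circuit has depth one if the sets `{t} ∪ I` of its gates are pairwise disjoint. -/
def DepthOne {N : ℕ} (S : Circuit N) : Prop :=
  S.Pairwise fun g₁ g₂ => Disjoint (insert g₁.t g₁.I) (insert g₂.t g₂.I)

/-- The depth of a circuit: the minimal number of depth-one sub-circuits whose
concatenation is the circuit. -/
noncomputable def Circuit.D {N : ℕ} (S : Circuit N) : ℕ :=
  sInf {d | ∃ parts : List (Circuit N),
    parts.length = d ∧ parts.flatten = S ∧ ∀ p ∈ parts, DepthOne p}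

/-- Padding an input vector with zero values on `q` additional inputs. -/
def pad {n q : ℕ} (x : Fin n → Bool) : Fin (n + q) → Bool :=
  fun i => if h : (i : ℕ) < n then x ⟨i, h⟩ else false

/-- A circuit `S` with `n + q` inputs implements `f : 𝔹ⁿ → 𝔹ᵐ` with `q` additional
inputs: there is a permutation `π` of the output positions such that for every `x`,
applying `S` to `⟨x, 0, …, 0⟩` and permuting the coordinates by `π` yields a vector
whose first `m` coordinates equal `f x`. -/
def Implements {n q m : ℕ} (S : Circuit (n + q)) (f : (Fin n → Bool) → Fin m → Bool) :
    Prop :=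
  m ≤ n + q ∧ ∃ π : Equiv.Perm (Fin (n + q)), ∀ x : Fin n → Bool, ∀ j : Fin m,
    ∀ hj : (j : ℕ) < n + q, Circuit.eval S (pad x) (π ⟨j, hj⟩) = f x j

/-- `f ∈ F(n, q)`: `f : 𝔹ⁿ → 𝔹ⁿ` is implementable with `q` additional inputs. -/
def Implementable (n q : ℕ) (f : (Fin n → Bool) → Fin n → Bool) : Prop :=
  ∃ S : Circuit (n + q), Implements S f

/-- `L(f, q)`: minimal gate complexity of a circuit implementing `f` with `q`
additional inputs. -/
noncomputable def Lmin (n q : ℕ) (f : (Fin n → Bool) → Fin n → Bool) : ℕ :=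
  sInf {l | ∃ S : Circuit (n + q), Implements S f ∧ S.L = l}

/-- The Shannon gate complexity function `L(n, q)`. -/
noncomputable def Lsh (n q : ℕ) : ℕ :=
  sSup {l | ∃ f, Implementable n q f ∧ Lmin n q f = l}

/-- `D(f, q)`: minimal depth of a circuit implementing `f` with `q` additional inputs. -/
noncomputable def Dmin (n q : ℕ) (f : (Fin n → Bool) → Fin n → Bool) : ℕ :=
  sInf {d | ∃ S : Circuit (n + q), Implements S f ∧ S.D = d}

/-- The Shannon depth function `D(n, q)`. -/
noncomputable def Dsh (n q : ℕ) : ℕ :=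
  sSup {d | ∃ f, Implementable n q f ∧ Dmin n q f = d}

/-- `W(f, q)`: minimal quantum weight of a circuit implementing `f` with `q`
additional inputs. -/
noncomputable def Wmin (WC WT : ℝ) (n q : ℕ) (f : (Fin n → Bool) → Fin n → Bool) : ℝ :=
  sInf {w | ∃ S : Circuit (n + q), Implements S f ∧ Circuit.W WC WT S = w}

/-- The Shannon quantum weight function `W(n, q)`. -/
noncomputable def Wsh (WC WT : ℝ) (n q : ℕ) : ℝ :=
  sSup {w | ∃ f, Implementable n q f ∧ Wmin WC WT n q f = w}

/-- `a ~ b`: `a n / b n → 1`. -/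
def AsympEquiv (a b : ℕ → ℝ) : Prop :=
  Tendsto (fun n => a n / b n) atTop (nhds 1)

/-- `a ≲ b`: `limsup (a n / b n) ≤ 1`. -/
def AsympLE (a b : ℕ → ℝ) : Prop :=
  Filter.limsup (fun n => a n / b n) atTop ≤ 1

/-- A growing function: nondecreasing and tending to `+∞`. -/
def Growing (φ : ℕ → ℝ) : Prop :=
  Monotone φ ∧ Tendsto φ atTop atTop

/-- `2 ^ (n - ⌈n / φ(n)⌉)` as a real number. -/
noncomputable def pow2e (φ : ℕ → ℝ) (n : ℕ) : ℝ :=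
  (2 : ℝ) ^ ((n : ℤ) - ⌈(n : ℝ) / φ n⌉)

end Rev

namespace Rev

/-- `c_n : 𝔹ⁿ → 𝔹^{2ⁿ}`: the tuple of all conjunctions `x₁^{a₁} ∧ ⋯ ∧ x_n^{a_n}`,
the index `j : Fin (2 ^ n)` encoding `a ∈ 𝔹ⁿ` via its binary digits. -/
def conjAll (n : ℕ) : (Fin n → Bool) → Fin (2 ^ n) → Bool :=
  fun x j => decide (∀ i : Fin n, x i = (j : ℕ).testBit i.val)

/-!
The conjunctions `c_n(x)` are the one-hot encoding of the number whose binary digits are `x`.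
The one-hot encoding of the low `⌊n/2⌋` digits is built in place on `2 ^ ⌊n/2⌋` ancillas, doubling
the occupied part of the register once per digit at a cost of two gates per line; likewise for the
high `⌈n/2⌉` digits. A final layer of `2 ^ n` Toffoli gates, one per output line, multiplies the two
encodings. Both the gate count and the number of ancillas are `2 ^ n + O(2 ^ (n / 2))`.
-/

open Set

namespace Gate

variable {N : ℕ}

def not (t : Fin N) : Gate N := ⟨∅, t, by simp, by simp⟩

/- `cnot` and `toffoli` degenerate to `not` when a control coincides with the target, so that
circuits can be written down without proof obligations. -/
def cnot (c t : Fin N) : Gate N :=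
  if h : c = t then not t else ⟨{c}, t, by simp, by simpa [eq_comm] using h⟩

def toffoli (c₁ c₂ t : Fin N) : Gate N :=
  if h : c₁ = t ∨ c₂ = t then not t
  else ⟨{c₁, c₂}, t, Finset.card_le_two, by simp [not_or, eq_comm] at h ⊢; exact h⟩

@[simp] lemma not_t (t : Fin N) : (not t).t = t := rfl

@[simp] lemma cnot_t (c t : Fin N) : (cnot c t).t = t := by
  unfold cnot; split <;> rfl

@[simp] lemma toffoli_t (c₁ c₂ t : Fin N) : (toffoli c₁ c₂ t).t = t := by
  unfold toffoli; split <;> rfl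

lemma cnot_I {c t : Fin N} (h : c ≠ t) : (cnot c t).I = {c} := by
  simp [cnot, h]

lemma toffoli_I {c₁ c₂ t : Fin N} (h₁ : c₁ ≠ t) (h₂ : c₂ ≠ t) :
    (toffoli c₁ c₂ t).I = {c₁, c₂} := by
  simp [toffoli, h₁, h₂]

lemma apply_not_self (t : Fin N) (v : Fin N → Bool) : (not t).apply v t = !v t := by
  simp [apply, not]

lemma apply_of_ne {g : Gate N} {v : Fin N → Bool} {ℓ : Fin N} (h : ℓ ≠ g.t) :
    g.apply v ℓ = v ℓ := if_neg h

end Gate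

namespace Circuit

variable {N : ℕ}

lemma eval_append (S₁ S₂ : Circuit N) (v : Fin N → Bool) :
    (S₁ ++ S₂).eval v = S₂.eval (S₁.eval v) :=
  List.foldl_append ..

lemma eval_cons (g : Gate N) (S : Circuit N) (v : Fin N → Bool) :
    eval (g :: S) v = S.eval (g.apply v) := rfl

lemma eval_apply_of_forall_ne {S : Circuit N} {ℓ : Fin N} (h : ∀ g ∈ S, g.t ≠ ℓ)
    (v : Fin N → Bool) : S.eval v ℓ = v ℓ := by
  induction S generalizing v with
  | nil => rfl
  | cons g S ih =>
    rw [eval_cons, ih (fun g' hg' => h g' (List.mem_cons_of_mem _ hg')),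
      Gate.apply_of_ne (h g List.mem_cons_self).symm]

lemma eval_apply_target_of_pairwise {S : Circuit N} (ht : S.Pairwise (·.t ≠ ·.t))
    (hc : ∀ g ∈ S, ∀ g' ∈ S, g.t ∉ g'.I) {g : Gate N} (hg : g ∈ S) (v : Fin N → Bool) :
    S.eval v g.t = xor (v g.t) (decide (∀ i ∈ g.I, v i = true)) := by
  induction S generalizing v with
  | nil => cases hg
  | cons g₀ S ih =>
    rw [List.pairwise_cons] at ht
    rw [eval_cons]
    rcases List.mem_cons.1 hg with rfl | hg
    · rw [eval_apply_of_forall_ne (fun g' hg' => (ht.1 g' hg').symm)]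
      simp [Gate.apply]
    · have hcontrol : ∀ i ∈ g.I, g₀.apply v i = v i := fun i hi =>
        Gate.apply_of_ne (ne_of_mem_of_not_mem hi (hc g₀ List.mem_cons_self g (.tail _ hg)))
      rw [ih ht.2 (fun a ha b hb => hc a (.tail _ ha) b (.tail _ hb)) hg,
        Gate.apply_of_ne (ht.1 g hg).symm]
      congr 1
      exact decide_eq_decide.2 (forall₂_congr fun i hi => by rw [hcontrol i hi])

lemma eval_map_range_apply_target {G : ℕ → Gate N} {r : ℕ}
    (ht : InjOn (fun i => (G i).t) (Iio r)) (hc : ∀ i < r, ∀ j < r, (G i).t ∉ (G j).I)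
    {i : ℕ} (hi : i < r) (v : Fin N → Bool) :
    eval ((List.range r).map G) v (G i).t =
      xor (v (G i).t) (decide (∀ c ∈ (G i).I, v c = true)) := by
  refine eval_apply_target_of_pairwise ?_ ?_ (List.mem_map_of_mem (List.mem_range.2 hi)) v
  · refine List.pairwise_map.2 (List.nodup_range.imp_of_mem fun ha hb hab => ?_)
    exact fun h => hab (ht (List.mem_range.1 ha) (List.mem_range.1 hb) h)
  · simp only [List.mem_map, List.mem_range]
    rintro _ ⟨i, hi, rfl⟩ _ ⟨j, hj, rfl⟩
    exact hc i hi j hj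

lemma eval_map_range_apply_of_forall_ne {G : ℕ → Gate N} {r : ℕ} {ℓ : Fin N}
    (h : ∀ i < r, (G i).t ≠ ℓ) (v : Fin N → Bool) :
    eval ((List.range r).map G) v ℓ = v ℓ :=
  eval_apply_of_forall_ne (S := (List.range r).map G) (by simpa using h) v

lemma eval_map_range_toffoli_apply {c₁ c₂ t : ℕ → Fin N} {r : ℕ} (ht : InjOn t (Iio r))
    (hc₁ : ∀ i < r, ∀ j < r, t i ≠ c₁ j) (hc₂ : ∀ i < r, ∀ j < r, t i ≠ c₂ j)
    {i : ℕ} (hi : i < r) (v : Fin N → Bool) :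
    eval ((List.range r).map fun j => Gate.toffoli (c₁ j) (c₂ j) (t j)) v (t i) =
      xor (v (t i)) (v (c₁ i) && v (c₂ i)) := by
  have hI {j : ℕ} (hj : j < r) : (Gate.toffoli (c₁ j) (c₂ j) (t j)).I = {c₁ j, c₂ j} :=
    Gate.toffoli_I (hc₁ j hj j hj).symm (hc₂ j hj j hj).symm
  have := eval_map_range_apply_target (G := fun j => Gate.toffoli (c₁ j) (c₂ j) (t j))
    (by simpa using ht) (fun i hi j hj => by simpa [hI hj] using ⟨hc₁ i hi j hj, hc₂ i hi j hj⟩)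
    hi v
  simpa [hI hi] using this

lemma eval_map_range_cnot_apply {c t : ℕ → Fin N} {r : ℕ} (ht : InjOn t (Iio r))
    (hc : ∀ i < r, ∀ j < r, t i ≠ c j) {i : ℕ} (hi : i < r) (v : Fin N → Bool) :
    eval ((List.range r).map fun j => Gate.cnot (c j) (t j)) v (t i) = xor (v (t i)) (v (c i)) := by
  have hI {j : ℕ} (hj : j < r) : (Gate.cnot (c j) (t j)).I = {c j} :=
    Gate.cnot_I (hc j hj j hj).symm
  have := eval_map_range_apply_target (G := fun j => Gate.cnot (c j) (t j))
    (by simpa using ht) (fun i hi j hj => by simpa [hI hj] using hc i hi j hj) hi v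
  simpa [hI hi] using this

end Circuit

lemma _root_.Nat.ofBits_succ_last (f : ℕ → Bool) (k : ℕ) :
    Nat.ofBits (fun i : Fin (k + 1) => f i) =
      Nat.ofBits (fun i : Fin k => f i) + (f k).toNat * 2 ^ k := by
  induction k generalizing f with
  | zero => simp [Nat.ofBits_succ]
  | succ k ih =>
    rw [Nat.ofBits_succ, Nat.ofBits_succ (fun i : Fin (k + 1) => f i)]
    have := ih (fun i => f (i + 1))
    simp only [Function.comp_def, Fin.val_succ] at this ⊢
    rw [this, pow_succ]
    simp only [Fin.val_zero]
    ring

lemma _root_.Nat.ofBits_add (f : ℕ → Bool) (a b : ℕ) :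
    Nat.ofBits (fun i : Fin (a + b) => f i) =
      Nat.ofBits (fun i : Fin a => f i) + 2 ^ a * Nat.ofBits (fun i : Fin b => f (a + i)) := by
  induction b with
  | zero => simp
  | succ b ih =>
    rw [← add_assoc, Nat.ofBits_succ_last, ih, Nat.ofBits_succ_last (fun i => f (a + i)), pow_add]
    ring

lemma conjAll_eq_decide_eq_ofBits (n : ℕ) (x : Fin n → Bool) (j : Fin (2 ^ n)) :
    conjAll n x j = decide ((j : ℕ) = Nat.ofBits x) := by
  refine decide_eq_decide.2 ⟨fun h => Nat.eq_of_testBit_eq fun i => ?_, fun h i => by simp [h]⟩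
  by_cases hi : i < n
  · simp [hi, h ⟨i, hi⟩]
  · rw [Nat.testBit_ofBits_ge _ _ (not_lt.1 hi), Nat.testBit_lt_two_pow
      (j.2.trans_le (Nat.pow_le_pow_right two_pos (not_lt.1 hi)))]

section Decoder

variable {N : ℕ}

/- A register is a map `ℕ → Fin N` of which only the lines `A 0, …, A (r - 1)` are used. -/
def OneHot (v : Fin N → Bool) (A : ℕ → Fin N) (r w : ℕ) : Prop :=
  ∀ u < r, v (A u) = decide (u = w)

/- In place, the one-hot encoding of `w < 2 ^ k` becomes that of `w + 2 ^ k` when line `x` is set: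
line `A (u + 2 ^ k)` picks up `A u ∧ x`, which is then cleared from `A u`. -/
def doublingStep (A : ℕ → Fin N) (x : Fin N) (k : ℕ) : Circuit N :=
  (List.range (2 ^ k)).map (fun u => Gate.toffoli (A u) x (A (u + 2 ^ k))) ++
    (List.range (2 ^ k)).map (fun u => Gate.cnot (A (u + 2 ^ k)) (A u))

def decoder (A : ℕ → Fin N) (x : ℕ → Fin N) : ℕ → Circuit N
  | 0 => [Gate.not (A 0)]
  | k + 1 => decoder A x k ++ doublingStep A (x k) k

lemma length_decoder (A : ℕ → Fin N) (x : ℕ → Fin N) (m : ℕ) :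
    (decoder A x m).length = 2 ^ (m + 1) - 1 := by
  induction m with
  | zero => rfl
  | succ m ih =>
    have : 0 < 2 ^ m := Nat.two_pow_pos m
    simp only [decoder, doublingStep, List.length_append, List.length_map, List.length_range, ih,
      pow_succ]
    omega

lemma eval_decoder_apply_of_forall_ne {A : ℕ → Fin N} {x : ℕ → Fin N} {m : ℕ} {ℓ : Fin N}
    (h : ∀ u < 2 ^ m, A u ≠ ℓ) (v : Fin N → Bool) : (decoder A x m).eval v ℓ = v ℓ := by
  induction m with
  | zero => exact Circuit.eval_apply_of_forall_ne (by simpa [decoder] using h 0 one_pos) v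
  | succ m ih =>
    have hm : 2 ^ (m + 1) = 2 ^ m + 2 ^ m := by rw [pow_succ]; ring
    rw [decoder, Circuit.eval_append, doublingStep, Circuit.eval_append,
      Circuit.eval_map_range_apply_of_forall_ne (by simpa using fun u hu => h u (by omega)),
      Circuit.eval_map_range_apply_of_forall_ne (by simpa using fun u hu => h _ (by omega)),
      ih fun u hu => h u (by omega)]

lemma oneHot_eval_doublingStep {A : ℕ → Fin N} {x : Fin N} {k w : ℕ} {v : Fin N → Bool}
    (hA : InjOn A (Iio (2 ^ (k + 1)))) (hx : ∀ u < 2 ^ (k + 1), A u ≠ x)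
    (hv : OneHot v A (2 ^ (k + 1)) w) (hw : w < 2 ^ k) :
    OneHot ((doublingStep A x k).eval v) A (2 ^ (k + 1)) (w + (v x).toNat * 2 ^ k) := by
  have hk : 2 ^ (k + 1) = 2 ^ k + 2 ^ k := by rw [pow_succ]; ring
  have hne {u u' : ℕ} (hu : u < 2 ^ (k + 1)) (hu' : u' < 2 ^ (k + 1)) (h : u ≠ u') :
      A u ≠ A u' := hA.ne hu hu' h
  have hhigh : InjOn (fun u => A (u + 2 ^ k)) (Iio (2 ^ k)) := fun u hu u' hu' h => by
    simp only [mem_Iio] at hu hu'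
    have := hA (by simp; omega) (by simp; omega) h
    omega
  have hlow : InjOn A (Iio (2 ^ k)) := hA.mono (Iio_subset_Iio (by omega))
  set v₁ := Circuit.eval ((List.range (2 ^ k)).map
    fun u => Gate.toffoli (A u) x (A (u + 2 ^ k))) v with hv₁
  have hv₁_high (u : ℕ) (hu : u < 2 ^ k) : v₁ (A (u + 2 ^ k)) = (decide (u = w) && v x) := by
    rw [hv₁, Circuit.eval_map_range_toffoli_apply hhigh
      (fun i hi j hj => hne (by omega) (by omega) (by omega)) (fun i hi _ _ => hx _ (by omega)) hu,
      hv _ (by omega), hv _ (by omega), decide_eq_false (by omega), Bool.false_xor]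
  have hv₁_low (u : ℕ) (hu : u < 2 ^ k) : v₁ (A u) = v (A u) :=
    Circuit.eval_map_range_apply_of_forall_ne
      (fun i hi => by simpa using hne (by omega) (by omega) (by omega)) v
  intro u hu
  rw [doublingStep, Circuit.eval_append, ← hv₁]
  rcases lt_or_ge u (2 ^ k) with hu' | hu'
  · rw [Circuit.eval_map_range_cnot_apply hlow
      (fun i hi j hj => hne (by omega) (by omega) (by omega)) hu', hv₁_low u hu', hv₁_high u hu',
      hv u hu]
    cases v x <;> simp; omega
  · obtain ⟨u, rfl⟩ : ∃ u', u = u' + 2 ^ k := ⟨u - 2 ^ k, by omega⟩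
    rw [Circuit.eval_map_range_apply_of_forall_ne
      (fun i hi => by simpa using hne (by omega) (by omega) (by omega)), hv₁_high u (by omega)]
    cases v x <;> simp; omega

lemma oneHot_eval_decoder {A : ℕ → Fin N} {x : ℕ → Fin N} {m : ℕ} {v : Fin N → Bool}
    (hA : InjOn A (Iio (2 ^ m))) (hx : ∀ i < m, ∀ u < 2 ^ m, A u ≠ x i)
    (hv : ∀ u < 2 ^ m, v (A u) = false) :
    OneHot ((decoder A x m).eval v) A (2 ^ m) (Nat.ofBits fun i : Fin m => v (x i)) := by
  induction m with
  | zero =>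
    intro u hu
    obtain rfl : u = 0 := by simpa using hu
    show (Gate.not (A 0)).apply v (A 0) = _
    simp [Gate.apply_not_self, hv 0 one_pos]
  | succ m ih =>
    have hm : 2 ^ (m + 1) = 2 ^ m + 2 ^ m := by rw [pow_succ]; ring
    have hw := Nat.ofBits_lt_two_pow fun i : Fin m => v (x i)
    have hv'_low :
        OneHot ((decoder A x m).eval v) A (2 ^ m) (Nat.ofBits fun i : Fin m => v (x i)) :=
      ih (hA.mono (Iio_subset_Iio (Nat.pow_le_pow_right two_pos m.le_succ)))
        (fun i hi u hu => hx i (by omega) u (by omega)) (fun u hu => hv u (by omega))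
    have hv' :
        OneHot ((decoder A x m).eval v) A (2 ^ (m + 1)) (Nat.ofBits fun i : Fin m => v (x i)) := by
      intro u hu
      by_cases hu' : u < 2 ^ m
      · exact hv'_low u hu'
      · rw [eval_decoder_apply_of_forall_ne (fun u' hu'' => hA.ne (by simp; omega) hu (by omega)),
          hv u hu, decide_eq_false (by omega)]
    have hxm : (decoder A x m).eval v (x m) = v (x m) :=
      eval_decoder_apply_of_forall_ne (fun u hu => hx m (by omega) u (by omega)) v
    rw [decoder, Circuit.eval_append, Nat.ofBits_succ_last (fun i => v (x i)), ← hxm]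
    exact oneHot_eval_doublingStep hA (fun u hu => hx m (by omega) u hu) hv' hw

/- Line `C j` receives `A (j % 2 ^ a) ∧ B (j / 2 ^ a)`, so the one-hot encodings of `wA < 2 ^ a`
and `wB` multiply to that of `wA + 2 ^ a * wB`. -/
def productLayer (A B C : ℕ → Fin N) (a b : ℕ) : Circuit N :=
  (List.range (2 ^ (a + b))).map fun j => Gate.toffoli (A (j % 2 ^ a)) (B (j / 2 ^ a)) (C j)

lemma oneHot_eval_productLayer {A B C : ℕ → Fin N} {a b wA wB : ℕ} {v : Fin N → Bool}
    (hC : InjOn C (Iio (2 ^ (a + b)))) (hCA : ∀ j < 2 ^ (a + b), ∀ u < 2 ^ a, C j ≠ A u)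
    (hCB : ∀ j < 2 ^ (a + b), ∀ u < 2 ^ b, C j ≠ B u) (hvA : OneHot v A (2 ^ a) wA)
    (hvB : OneHot v B (2 ^ b) wB) (hvC : ∀ j < 2 ^ (a + b), v (C j) = false) (hwA : wA < 2 ^ a) :
    OneHot ((productLayer A B C a b).eval v) C (2 ^ (a + b)) (wA + 2 ^ a * wB) := by
  have hmod (j : ℕ) : j % 2 ^ a < 2 ^ a := Nat.mod_lt _ (Nat.two_pow_pos a)
  have hdiv {j : ℕ} (hj : j < 2 ^ (a + b)) : j / 2 ^ a < 2 ^ b :=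
    Nat.div_lt_of_lt_mul (by rwa [← pow_add])
  intro j hj
  rw [productLayer, Circuit.eval_map_range_toffoli_apply hC
      (fun i hi k _ => hCA i hi _ (hmod k)) (fun i hi k hk => hCB i hi _ (hdiv hk)) hj,
    hvC j hj, hvA _ (hmod j), hvB _ (hdiv hj), Bool.false_xor, ← Bool.decide_and]
  refine decide_eq_decide.2 ?_
  rw [and_comm, Nat.div_mod_unique (Nat.two_pow_pos a)]
  omega

end Decoder

lemma implements_of_injective {n q m : ℕ} {S : Circuit (n + q)}
    {f : (Fin n → Bool) → Fin m → Bool} (out : Fin m → Fin (n + q))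
    (hout : Function.Injective out) (hS : ∀ x j, S.eval (pad x) (out j) = f x j) :
    Implements S f := by
  classical
  refine ⟨by simpa using Fintype.card_le_of_injective out hout, ?_⟩
  let g (i : Fin (n + q)) : Fin (n + q) := if h : (i : ℕ) < m then out ⟨i, h⟩ else i
  have hg {i : Fin (n + q)} (h : (i : ℕ) < m) : g i = out ⟨i, h⟩ := dif_pos h
  obtain ⟨π, hπ⟩ := Set.MapsTo.exists_equiv_extend_of_card_eq (t := Finset.univ)
    (s := {i : Fin (n + q) | (i : ℕ) < m}) (f := g) (by simp)
    (fun _ _ => Finset.mem_coe.2 (Finset.mem_univ _))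
    (fun i hi i' hi' h => by
      rw [hg hi, hg hi'] at h
      exact Fin.ext (by simpa using congrArg Fin.val (hout h)))
  refine ⟨π.trans (Equiv.subtypeUnivEquiv Finset.mem_univ), fun x j hj => ?_⟩
  have hj' : ((⟨j, hj⟩ : Fin (n + q)) : ℕ) < m := j.2
  simp [hπ _ hj', hg hj', hS]

section Layout

def ancillas (n : ℕ) : ℕ := 2 ^ (n / 2) + 2 ^ (n - n / 2) + 2 ^ n

/- Line `m` of the circuit for `n` variables, taken modulo the number of lines so that the layout
needs no bounds proofs: the inputs occupy `[0, n)`, followed by the three registers below. -/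
def wire (n m : ℕ) : Fin (n + ancillas n) :=
  ⟨m % (n + ancillas n), Nat.mod_lt _ (by unfold ancillas; positivity)⟩

def lowRegister (n u : ℕ) : Fin (n + ancillas n) := wire n (n + u)

def highRegister (n u : ℕ) : Fin (n + ancillas n) := wire n (n + 2 ^ (n / 2) + u)

def outputRegister (n j : ℕ) : Fin (n + ancillas n) :=
  wire n (n + 2 ^ (n / 2) + 2 ^ (n - n / 2) + j)

def inputDecoders (n : ℕ) : Circuit (n + ancillas n) :=
  decoder (lowRegister n) (wire n) (n / 2) ++
    decoder (highRegister n) (fun i => wire n (n / 2 + i)) (n - n / 2)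

def conjCircuit (n : ℕ) : Circuit (n + ancillas n) :=
  inputDecoders n ++
    productLayer (lowRegister n) (highRegister n) (outputRegister n) (n / 2) (n - n / 2)

variable {n : ℕ}

lemma val_wire {m : ℕ} (h : m < n + ancillas n) : (wire n m : ℕ) = m := Nat.mod_eq_of_lt h

lemma wire_ne_wire {m m' : ℕ} (hm : m < n + ancillas n) (hm' : m' < n + ancillas n)
    (h : m ≠ m') : wire n m ≠ wire n m' := fun e =>
  h (by simpa [val_wire hm, val_wire hm'] using congrArg Fin.val e)

lemma injOn_wire_add {o r : ℕ} (h : o + r ≤ n + ancillas n) :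
    InjOn (fun u => wire n (o + u)) (Iio r) := fun u hu u' hu' e => by
  simp only [mem_Iio] at hu hu'
  by_contra hne
  exact wire_ne_wire (by omega) (by omega) (by omega) e

lemma pad_wire_of_lt (x : Fin n → Bool) {i : ℕ} (hi : i < n) :
    pad (q := ancillas n) x (wire n i) = x ⟨i, hi⟩ := by
  have h := val_wire (n := n) (m := i) (by omega)
  simp [pad, h, hi]

lemma pad_wire_of_le (x : Fin n → Bool) {m : ℕ} (h₁ : n ≤ m) (h₂ : m < n + ancillas n) :
    pad x (wire n m) = false := by
  simp [pad, val_wire h₂, not_lt.2 h₁]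

lemma add_ancillas (n : ℕ) : n + ancillas n = n + 2 ^ (n / 2) + 2 ^ (n - n / 2) + 2 ^ n := by
  unfold ancillas; omega

lemma eval_inputDecoders (x : Fin n → Bool) :
    OneHot ((inputDecoders n).eval (pad x)) (lowRegister n) (2 ^ (n / 2))
        (Nat.ofBits fun i : Fin (n / 2) => pad x (wire n i)) ∧
      OneHot ((inputDecoders n).eval (pad x)) (highRegister n) (2 ^ (n - n / 2))
        (Nat.ofBits fun i : Fin (n - n / 2) => pad x (wire n (n / 2 + i))) ∧
      ∀ j < 2 ^ n, (inputDecoders n).eval (pad x) (outputRegister n j) = false := by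
  have := add_ancillas n
  have := Nat.two_pow_pos (n / 2)
  have := Nat.two_pow_pos (n - n / 2)
  have := Nat.two_pow_pos n
  simp only [inputDecoders, Circuit.eval_append]
  set v₁ := (decoder (lowRegister n) (wire n) (n / 2)).eval (pad x)
  set v₂ := (decoder (highRegister n) (fun i => wire n (n / 2 + i)) (n - n / 2)).eval v₁
  have hv₁ {m : ℕ} (hm : m < n + ancillas n) (h : m < n ∨ n + 2 ^ (n / 2) ≤ m) :
      v₁ (wire n m) = pad x (wire n m) :=
    eval_decoder_apply_of_forall_ne (fun u hu => wire_ne_wire (by omega) hm (by omega)) _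
  have hv₂ {m : ℕ} (hm : m < n + ancillas n)
      (h : m < n + 2 ^ (n / 2) ∨ n + 2 ^ (n / 2) + 2 ^ (n - n / 2) ≤ m) :
      v₂ (wire n m) = v₁ (wire n m) :=
    eval_decoder_apply_of_forall_ne (fun u hu => wire_ne_wire (by omega) hm (by omega)) _
  have hv₁_low : OneHot v₁ (lowRegister n) (2 ^ (n / 2))
      (Nat.ofBits fun i : Fin (n / 2) => pad x (wire n i)) :=
    oneHot_eval_decoder (injOn_wire_add (by omega))
      (fun i hi u hu => wire_ne_wire (by omega) (by omega) (by omega))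
      (fun u hu => pad_wire_of_le x (by omega) (by omega))
  refine ⟨fun u hu => ?_, ?_, fun j hj => ?_⟩
  · rw [lowRegister, hv₂ (by omega) (by omega)]
    exact hv₁_low u hu
  · have := oneHot_eval_decoder (A := highRegister n) (x := fun i => wire n (n / 2 + i)) (v := v₁)
      (injOn_wire_add (o := n + 2 ^ (n / 2)) (r := 2 ^ (n - n / 2)) (by omega))
      (fun i hi u hu => wire_ne_wire (by omega) (by omega) (by omega))
      (fun u hu => by
        rw [highRegister, hv₁ (by omega) (by omega), pad_wire_of_le x (by omega) (by omega)])
    convert this using 4 with i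
    have := i.2
    exact (hv₁ (m := n / 2 + i) (by omega) (by omega)).symm
  · rw [outputRegister, hv₂ (by omega) (by omega), hv₁ (by omega) (by omega),
      pad_wire_of_le x (by omega) (by omega)]

lemma oneHot_eval_conjCircuit (x : Fin n → Bool) :
    OneHot ((conjCircuit n).eval (pad x)) (outputRegister n) (2 ^ n) (Nat.ofBits x) := by
  have := add_ancillas n
  have := Nat.two_pow_pos (n / 2)
  have := Nat.two_pow_pos (n - n / 2)
  have := Nat.two_pow_pos n
  have hsplit : n / 2 + (n - n / 2) = n := by omega
  have hpow : 2 ^ (n / 2 + (n - n / 2)) = 2 ^ n := by rw [hsplit]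
  obtain ⟨hlow, hhigh, hout⟩ := eval_inputDecoders x
  have hv := oneHot_eval_productLayer (C := outputRegister n)
    (injOn_wire_add (o := n + 2 ^ (n / 2) + 2 ^ (n - n / 2)) (by omega))
    (fun j hj u hu => wire_ne_wire (by omega) (by omega) (by omega))
    (fun j hj u hu => wire_ne_wire (by omega) (by omega) (by omega))
    hlow hhigh (fun j hj => hout j (by omega)) (Nat.ofBits_lt_two_pow _)
  have hbits : Nat.ofBits (fun i : Fin (n / 2 + (n - n / 2)) => pad x (wire n i)) =
      Nat.ofBits x := by
    rw [hsplit]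
    exact congrArg Nat.ofBits (funext fun i => pad_wire_of_lt x i.2)
  rw [hpow, ← Nat.ofBits_add (fun i => pad x (wire n i)), hbits] at hv
  rwa [conjCircuit, Circuit.eval_append]

lemma implements_conjCircuit (n : ℕ) : Implements (conjCircuit n) (conjAll n) := by
  have hinj : InjOn (outputRegister n) (Iio (2 ^ n)) :=
    injOn_wire_add (by rw [add_ancillas])
  refine implements_of_injective (fun j => outputRegister n j)
    (fun j j' h => Fin.ext (hinj j.2 j'.2 h)) fun x j => ?_
  rw [conjAll_eq_decide_eq_ofBits, oneHot_eval_conjCircuit x j j.2]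

lemma length_conjCircuit (n : ℕ) :
    (conjCircuit n).L = (2 ^ (n / 2 + 1) - 1) + (2 ^ (n - n / 2 + 1) - 1) + 2 ^ n := by
  have hsplit : n / 2 + (n - n / 2) = n := by omega
  simp [conjCircuit, inputDecoders, Circuit.L, length_decoder, productLayer, hsplit, add_assoc]

end Layout

lemma asympEquiv_two_pow {f : ℕ → ℕ} (C : ℕ) (hlow : ∀ n, 2 ^ n ≤ f n)
    (hup : ∀ n, f n ≤ 2 ^ n + C * 2 ^ (n - n / 2)) :
    AsympEquiv (fun n => (f n : ℝ)) (fun n => (2 : ℝ) ^ n) := by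
  have hlim : Tendsto (fun n : ℕ => 1 + (C : ℝ) * (1 / 2) ^ (n / 2)) atTop (nhds 1) := by
    have h : Tendsto (fun n : ℕ => n / 2) atTop atTop :=
      tendsto_atTop_atTop.2 fun b => ⟨2 * b, fun n hn => by omega⟩
    have hgeom :=
      tendsto_pow_atTop_nhds_zero_of_lt_one (r := (1 / 2 : ℝ)) (by norm_num) (by norm_num)
    simpa using ((hgeom.comp h).const_mul (C : ℝ)).const_add 1
  refine tendsto_of_tendsto_of_tendsto_of_le_of_le tendsto_const_nhds hlim (fun n => ?_) fun n => ?_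
  · dsimp only
    rw [le_div_iff₀ (by positivity), one_mul]
    exact_mod_cast hlow n
  · have hscale : (2 : ℝ) ^ (n - n / 2) = (1 / 2) ^ (n / 2) * 2 ^ n := by
      rw [one_div, inv_pow, inv_mul_eq_div, eq_div_iff (by positivity), ← pow_add,
        Nat.sub_add_cancel (Nat.div_le_self n 2)]
    rw [div_le_iff₀ (by positivity)]
    calc (f n : ℝ) ≤ 2 ^ n + C * 2 ^ (n - n / 2) := by exact_mod_cast hup n
      _ = (1 + C * (1 / 2) ^ (n / 2)) * 2 ^ n := by rw [hscale]; ring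

/-- All `2ⁿ` conjunctions of `n` variables can be implemented by reversible circuits
`S_n` with `q n` additional inputs, where `L(S_n) ~ 2ⁿ` and `q n ~ 2ⁿ`. -/
theorem conjunctions_complexity :
    ∃ (q : ℕ → ℕ) (S : ∀ n, Circuit (n + q n)),
      (∀ n, Implements (S n) (conjAll n)) ∧
      AsympEquiv (fun n => ((S n).L : ℝ)) (fun n => (2 : ℝ) ^ n) ∧
      AsympEquiv (fun n => (q n : ℝ)) (fun n => (2 : ℝ) ^ n) := by
  have hhalf (n : ℕ) : 2 ^ (n / 2) ≤ 2 ^ (n - n / 2) := Nat.pow_le_pow_right two_pos (by omega)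
  refine ⟨ancillas, conjCircuit, implements_conjCircuit, asympEquiv_two_pow 4 (fun n => ?_)
    (fun n => ?_), asympEquiv_two_pow 2 (fun n => ?_) fun n => ?_⟩
  all_goals have := hhalf n; have := Nat.two_pow_pos (n / 2)
  · rw [length_conjCircuit]; omega
  · rw [length_conjCircuit, pow_succ, pow_succ]; omega
  · unfold ancillas; omega
  · unfold ancillas; omega

end Rev
end

section
/- For every n and every q ≥ n, every transformation f: 𝔹^n → 𝔹^n (not necessarily bijective) can be implemented by a reversible circuit over NOT, CNOT and C²NOT gates with q additional inputs; that is, F(n,q) = P₂(n,n), the set of all maps 𝔹^n → 𝔹^n. -/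
open Filter

/-!
Output `j` is produced on line `n + j`, which starts at `0`, by a circuit that XORs
`f x j` into that line and restores every other line. Such a circuit exists for any Boolean
function `φ` of `k` of the lines as soon as `k + 2 ≤ N` (or `k ≤ 1`): by Shannon expansion
`φ = φ₀ ⊕ (x_c ∧ φ₁)` with `φ₀, φ₁` independent of `x_c`, and `x_c ∧ φ₁` is added to the
target by two Toffoli gates interleaved with two copies of a circuit writing `φ₁` into a spare
line, whose arbitrary content is thereby restored. For `k ≤ 1` the cofactor `φ₁` is constant
and a CNOT suffices. Since `q ≥ n`, the lines `n + j` exist and the room suffices; a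
permutation finally moves line `n + j` to position `j`.
-/

open Function

lemma Bool.shannon_expansion {ι : Type*} [DecidableEq ι] (φ : (ι → Bool) → Bool) (c : ι)
    (v : ι → Bool) :
    φ v = (φ (update v c false) ^^ (v c && (φ (update v c false) ^^ φ (update v c true)))) := by
  cases hc : v c
  · simp [show update v c false = v from hc ▸ update_eq_self c v]
  · simp [show update v c true = v from hc ▸ update_eq_self c v]

lemma Equiv.Perm.exists_apply_eq {α ι : Type*} [Finite ι] {s t : ι → α} (hs : Injective s)
    (ht : Injective t) : ∃ π : Equiv.Perm α, ∀ i, π (s i) = t i := by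
  classical
  have : Finite {x | x ∈ Set.range s} := Finite.Set.finite_range s
  refine ⟨((Equiv.ofInjective s hs).symm.trans (Equiv.ofInjective t ht)).extendSubtype,
    fun i => ?_⟩
  rw [Equiv.extendSubtype_apply_of_mem _ _ ⟨i, rfl⟩]
  simp

lemma dependsOn_comp_range {ι κ α β : Type*} (g : (κ → α) → β) (e : κ → ι) :
    DependsOn (fun v : ι → α => g (v ∘ e)) (Set.range e) := fun _ _ hvw =>
  congrArg g (funext fun i => hvw _ ⟨i, rfl⟩)

namespace Rev

variable {N : ℕ}

@[simp] lemma Circuit.eval_nil (v : Fin N → Bool) : Circuit.eval [] v = v := rfl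

@[simp] lemma Circuit.eval_cons_s12 (g : Gate N) (S : Circuit N) (v : Fin N → Bool) :
    Circuit.eval (g :: S) v = S.eval (g.apply v) := rfl

@[simp] lemma Circuit.eval_append_s12 (S T : Circuit N) (v : Fin N → Bool) :
    Circuit.eval (S ++ T) v = T.eval (S.eval v) :=
  List.foldl_append

lemma Gate.apply_eq_update (g : Gate N) (v : Fin N → Bool) :
    g.apply v = update v g.t (v g.t ^^ decide (∀ i ∈ g.I, v i = true)) := by
  funext j
  simp only [Gate.apply, update_apply]

def Gate.not_s12 (t : Fin N) : Gate N := ⟨∅, t, by simp, by simp⟩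

def Gate.cnot_s12 {c t : Fin N} (hct : c ≠ t) : Gate N := ⟨{c}, t, by simp, by simpa using hct.symm⟩

def Gate.ccnot {a b t : Fin N} (hat : a ≠ t) (hbt : b ≠ t) : Gate N :=
  ⟨{a, b}, t, Finset.card_le_two, by simp [hat.symm, hbt.symm]⟩

@[simp] lemma Gate.apply_not (t : Fin N) (v : Fin N → Bool) :
    (Gate.not_s12 t).apply v = update v t (!v t) := by
  simp [Gate.apply_eq_update, Gate.not_s12]

@[simp] lemma Gate.apply_cnot {c t : Fin N} (hct : c ≠ t) (v : Fin N → Bool) :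
    (Gate.cnot_s12 hct).apply v = update v t (v t ^^ v c) := by
  simp [Gate.apply_eq_update, Gate.cnot_s12]

@[simp] lemma Gate.apply_ccnot {a b t : Fin N} (hat : a ≠ t) (hbt : b ≠ t) (v : Fin N → Bool) :
    (Gate.ccnot hat hbt).apply v = update v t (v t ^^ (v a && v b)) := by
  simp [Gate.apply_eq_update, Gate.ccnot, Bool.decide_and]

def Circuit.XorsInto (S : Circuit N) (t : Fin N) (φ : (Fin N → Bool) → Bool) : Prop :=
  ∀ v, S.eval v = update v t (v t ^^ φ v)

namespace Circuit.XorsInto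

variable {S T : Circuit N} {t : Fin N} {φ ψ : (Fin N → Bool) → Bool}

lemma nil (t : Fin N) : Circuit.XorsInto [] t fun _ => false := by
  intro v
  simp

lemma not_s12 (t : Fin N) : Circuit.XorsInto [Gate.not_s12 t] t fun _ => true := by
  intro v
  simp

lemma cnot_s12 {c t : Fin N} (hct : c ≠ t) : Circuit.XorsInto [Gate.cnot_s12 hct] t fun v => v c := by
  intro v
  simp

lemma congr (hS : S.XorsInto t φ) (h : ∀ v, φ v = ψ v) : S.XorsInto t ψ := by
  simpa only [Circuit.XorsInto, h] using hS

lemma append (hS : S.XorsInto t φ) (hT : T.XorsInto t ψ) (hψ : DependsOn ψ {t}ᶜ) :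
    (S ++ T).XorsInto t fun v => φ v ^^ ψ v := by
  intro v
  have hψv : ψ (update v t (v t ^^ φ v)) = ψ v :=
    hψ fun i hi => update_of_ne (by simpa using hi) _ _
  simp [hS v, hT _, hψv]

lemma exists_const (t : Fin N) (b : Bool) : ∃ S : Circuit N, S.XorsInto t fun _ => b := by
  cases b
  exacts [⟨_, nil t⟩, ⟨_, not_s12 t⟩]

/-- The line `a` is borrowed: its content is arbitrary and is restored by the second copy of
`S`, while the two Toffoli gates add `(a ⊕ φ) ∧ c` and `a ∧ c` to `t`, which sum to `φ ∧ c`. -/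
lemma and_of_borrowed {a c : Fin N} (hS : S.XorsInto a φ) (hφ : DependsOn φ {a, t}ᶜ)
    (hat : a ≠ t) (hct : c ≠ t) (hca : c ≠ a) :
    (S ++ Gate.ccnot hat hct :: S ++ [Gate.ccnot hat hct]).XorsInto t fun v => v c && φ v := by
  intro v
  have hφv : ∀ x y, φ (update (update v a x) t y) = φ v := fun x y => hφ fun i hi => by
    simp only [Set.mem_compl_iff, Set.mem_insert_iff, Set.mem_singleton_iff, not_or] at hi
    simp [hi.1, hi.2]
  simp only [Circuit.eval_append_s12, Circuit.eval_cons_s12, Circuit.eval_nil, hS _, Gate.apply_ccnot, hφv]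
  ext j
  simp only [update_apply, if_neg hat, if_neg hat.symm, if_neg hct, if_neg hca]
  split_ifs with hjt hja
  · cases v a <;> cases v c <;> cases φ v <;> simp
  · simp [hja]
  · rfl

lemma exists_and_const {c : Fin N} (hct : c ≠ t) (b : Bool) :
    ∃ S : Circuit N, S.XorsInto t fun v => v c && b := by
  cases b
  · exact ⟨_, (nil t).congr fun v => (Bool.and_false (v c)).symm⟩
  · exact ⟨_, (cnot_s12 hct).congr fun v => (Bool.and_true (v c)).symm⟩

end Circuit.XorsInto

theorem Circuit.exists_xorsInto_of_dependsOn {s : Finset (Fin N)} {t : Fin N} (ht : t ∉ s)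
    {φ : (Fin N → Bool) → Bool} (hφ : DependsOn φ s) (hN : s.card ≤ 1 ∨ s.card + 2 ≤ N) :
    ∃ S : Circuit N, S.XorsInto t φ := by
  induction s using Finset.induction_on generalizing t φ with
  | empty =>
    replace hφ : DependsOn φ ∅ := by simpa using hφ
    obtain ⟨S, hS⟩ := XorsInto.exists_const t (φ fun _ => false)
    exact ⟨S, hS.congr fun v => hφ.empty _ _⟩
  | insert c s hc ih =>
    rw [Finset.mem_insert, not_or] at ht
    have hcof : ∀ b, DependsOn (fun v => φ (update v c b)) s := fun b => by
      simpa [Finset.erase_insert hc] using hφ.update c b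
    set φ₀ := fun v => φ (update v c false)
    set φ₁ := fun v => φ₀ v ^^ φ (update v c true)
    have hφ₁ : DependsOn φ₁ s := fun v w hvw => by
      simp only [φ₁, φ₀, hcof false hvw, hcof true hvw]
    have hcard : s.card + 1 = (insert c s).card := (Finset.card_insert_of_notMem hc).symm
    obtain ⟨S₀, hS₀⟩ := ih ht.2 (hcof false) (by omega)
    obtain ⟨S₁, hS₁⟩ : ∃ S : Circuit N, S.XorsInto t fun v => v c && φ₁ v := by
      rcases s.eq_empty_or_nonempty with rfl | hs
      · replace hφ₁ : DependsOn φ₁ ∅ := by simpa using hφ₁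
        obtain ⟨S, hS⟩ := XorsInto.exists_and_const (Ne.symm ht.1) (φ₁ fun _ => false)
        exact ⟨S, hS.congr fun v => by rw [hφ₁.empty v (fun _ => false)]⟩
      · have hN : s.card + 3 ≤ N := by have := hs.card_pos; omega
        obtain ⟨a, -, ha⟩ := Finset.exists_mem_notMem_of_card_lt_card
          (s := insert t (insert c s)) (t := Finset.univ) (by
            simpa using (Finset.card_insert_le _ _).trans_lt (by omega))
        simp only [Finset.mem_insert, not_or] at ha
        obtain ⟨S, hS⟩ := ih ha.2.2 hφ₁ (by omega)
        refine ⟨_, hS.and_of_borrowed (hφ₁.mono ?_) ha.1 (Ne.symm ht.1) (Ne.symm ha.2.1)⟩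
        rintro i hi (rfl | rfl)
        exacts [ha.2.2 hi, ht.2 hi]
    refine ⟨S₁ ++ S₀, (hS₁.append hS₀ ((hcof false).mono ?_)).congr fun v => ?_⟩
    · rintro i hi rfl
      exact ht.2 hi
    · rw [Bool.xor_comm, Bool.shannon_expansion φ c v]

theorem Circuit.exists_xorsInto_comp {k : ℕ} {e : Fin k → Fin N} (he : Injective e) {t : Fin N}
    (ht : t ∉ Set.range e) (g : (Fin k → Bool) → Bool) (hN : k ≤ 1 ∨ k + 2 ≤ N) :
    ∃ S : Circuit N, S.XorsInto t fun v => g (v ∘ e) := by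
  refine exists_xorsInto_of_dependsOn (s := Finset.univ.image e) (by simpa using ht)
    (by simpa using dependsOn_comp_range g e) ?_
  rwa [Finset.card_image_of_injective _ he, Finset.card_univ, Fintype.card_fin]

lemma Circuit.eval_flatMap_of_xorsInto {ι : Type*} {tgt : ι → Fin N} (htgt : Injective tgt)
    {φ : ι → (Fin N → Bool) → Bool} (hφ : ∀ j, DependsOn (φ j) (Set.range tgt)ᶜ)
    {C : ι → Circuit N} (hC : ∀ j, (C j).XorsInto (tgt j) (φ j)) {l : List ι} (hl : l.Nodup)
    (v : Fin N → Bool) :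
    (∀ i ∉ l.map tgt, Circuit.eval (l.flatMap C) v i = v i) ∧
      ∀ j ∈ l, Circuit.eval (l.flatMap C) v (tgt j) = (v (tgt j) ^^ φ j v) := by
  induction l generalizing v with
  | nil => simp
  | cons j₀ l ih =>
    obtain ⟨hj₀, hl⟩ := List.nodup_cons.mp hl
    set w := update v (tgt j₀) (v (tgt j₀) ^^ φ j₀ v)
    have hφw : ∀ j, φ j w = φ j v := fun j =>
      hφ j fun i hi => update_of_ne (by rintro rfl; exact hi ⟨j₀, rfl⟩) _ _
    obtain ⟨ih₁, ih₂⟩ := ih hl w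
    simp only [List.flatMap_cons, Circuit.eval_append_s12, hC j₀ v]
    refine ⟨fun i hi => ?_, fun j hj => ?_⟩
    · rw [List.map_cons, List.mem_cons, not_or] at hi
      rw [ih₁ i hi.2]
      exact update_of_ne hi.1 _ _
    · rcases List.mem_cons.mp hj with rfl | hj
      · rw [ih₁ _ (by simpa [htgt.eq_iff] using hj₀)]
        exact update_self _ _ _
      · rw [ih₂ j hj, hφw]
        exact congrArg (· ^^ φ j v) (update_of_ne (htgt.ne (ne_of_mem_of_not_mem hj hj₀)) _ _)

/-- For every `q ≥ n`, every transformation `f : 𝔹ⁿ → 𝔹ⁿ` can be implemented by a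
reversible circuit with `q` additional inputs; that is, `F(n, q) = P₂(n, n)`. -/
theorem implementable_of_q_ge_n (n q : ℕ) (h : n ≤ q)
    (f : (Fin n → Bool) → Fin n → Bool) :
    ∃ S : Circuit (n + q), Implements S f := by
  set inp : Fin n → Fin (n + q) := Fin.castAdd q
  set out : Fin n → Fin (n + q) := fun j => Fin.natAdd n (Fin.castLE h j)
  have hinp : Injective inp := Fin.castAdd_injective n q
  have hout : Injective out := (Fin.natAdd_injective q n).comp (Fin.castLE_injective h)
  have hdisj : Set.range inp ⊆ (Set.range out)ᶜ := by
    rintro _ ⟨i, rfl⟩ ⟨j, hj⟩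
    simp only [out, inp, Fin.ext_iff, Fin.val_natAdd, Fin.val_castLE, Fin.val_castAdd] at hj
    omega
  choose C hC using fun j => Circuit.exists_xorsInto_comp hinp (t := out j)
    (fun hj => hdisj hj ⟨j, rfl⟩) (fun x => f x j) (by omega)
  obtain ⟨π, hπ⟩ := Equiv.Perm.exists_apply_eq hinp hout
  refine ⟨(List.finRange n).flatMap C, by omega, π, fun x j hj => ?_⟩
  have hx : pad x ∘ inp = x := funext fun i => by simp [pad, inp]
  have h0 : pad x (out j) = false := by simp [pad, out]
  have hC_eval := Circuit.eval_flatMap_of_xorsInto hout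
    (fun j => (dependsOn_comp_range (f · j) inp).mono hdisj) hC (List.nodup_finRange n) (pad x)
  rw [show (⟨j, hj⟩ : Fin (n + q)) = inp j from rfl, hπ, hC_eval.2 j (List.mem_finRange j), hx,
    h0, Bool.false_xor]

end Rev
end
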